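/- Let q be a prime power and t ≥ 2 an integer. If (a_1,b_1), ..., (a_t,b_t) are nonzero pairs in F_{q^{t-1}} × F_{q^{t-1}} that are pairwise non-proportional (i.e., they represent t distinct points of the projective line P_1(F_{q^{t-1}})), then the t vectors w(a_1,b_1), ..., w(a_t,b_t) are linearly independent over F_{q^{t-1}}. (Equivalently: any t points of the variety 𝒱 are in general position.) -/

import Mathlib

/-- The coordinate vector `w(a,b)` of the point
`(a,b) ⊗ (a^q,b^q) ⊗ ⋯ ⊗ (a^(q^(t-2)),b^(q^(t-2)))` of the variety `𝒱`: it is indexed by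
the subsets `S` of `T = {0, 1, …, t-2}` (realised as `Finset (Fin (t-1))`), the coordinate
at `S` being `(∏_{i ∈ S} a^(q^i)) * (∏_{j ∈ T \ S} b^(q^j))`. -/
def wvec {K : Type*} [Field K] (q t : ℕ) (a b : K) : Finset (Fin (t - 1)) → K :=
  fun S => (∏ i ∈ S, a ^ q ^ (i : ℕ)) * (∏ j ∈ Sᶜ, b ^ q ^ (j : ℕ))

/-!
Write `q = p ^ e` with `p = char K`. Since `z ↦ z ^ q ^ k` is additive, for fixed
`α β : Fin (t - 1) → K` the product `∏ₖ (βₖ x - αₖ y) ^ q ^ k` expands into a linear form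
in the coordinates of `w(x, y)`. Taking for `(αₖ, βₖ)` the `t - 1` points other than the
`i`-th one, this form vanishes on every `w(a_j, b_j)` with `j ≠ i` but not on `w(a_i, b_i)`,
because the points are pairwise non-proportional. Such a family of separating forms forces
linear independence.
-/

open Finset Matrix

section

variable {K : Type*} [Field K]

theorem linearIndependent_of_dotProduct {ι n : Type*} [Fintype n] {v d : ι → n → K}
    (hne : ∀ i, d i ⬝ᵥ v i ≠ 0) (hzero : Pairwise fun i j => d i ⬝ᵥ v j = 0) :
    LinearIndependent K v := by
  classical
  refine .of_pairwise_dual_eq_zero_one v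
    (fun i => (d i ⬝ᵥ v i)⁻¹ • dotProductEquiv K n (d i)) (fun i j hij => ?_) (fun i => ?_)
  · simp [hzero hij]
  · simp [hne i]

/-- The coefficients of `∏ₖ (βₖ X - αₖ Y) ^ q ^ k` in the monomials `w(X, Y)_S`. -/
def wvecDual (q t : ℕ) (α β : Fin (t - 1) → K) : Finset (Fin (t - 1)) → K :=
  fun S => (∏ k ∈ S, β k ^ q ^ (k : ℕ)) * ∏ k ∈ Sᶜ, -α k ^ q ^ (k : ℕ)

theorem wvecDual_dotProduct_wvec {p : ℕ} [ExpChar K p] (e t : ℕ) (α β : Fin (t - 1) → K)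
    (x y : K) :
    wvecDual (p ^ e) t α β ⬝ᵥ wvec (p ^ e) t x y =
      ∏ k, (β k * x - α k * y) ^ (p ^ e) ^ (k : ℕ) := by
  have frobenius (k : Fin (t - 1)) : (β k * x - α k * y) ^ (p ^ e) ^ (k : ℕ) =
      β k ^ (p ^ e) ^ (k : ℕ) * x ^ (p ^ e) ^ (k : ℕ) +
        -α k ^ (p ^ e) ^ (k : ℕ) * y ^ (p ^ e) ^ (k : ℕ) := by
    rw [← pow_mul, sub_pow_expChar_pow, mul_pow, mul_pow, neg_mul, sub_eq_add_neg]
  simp only [frobenius, Fintype.prod_add, prod_mul_distrib, dotProduct, wvecDual, wvec]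
  exact sum_congr rfl fun S _ => by ring

theorem linearIndependent_wvec_succ {p : ℕ} [ExpChar K p] (e n : ℕ) (a b : Fin (n + 1) → K)
    (hprop : ∀ i j, i ≠ j → a i * b j ≠ a j * b i) :
    LinearIndependent K fun i => wvec (p ^ e) (n + 1) (a i) (b i) := by
  refine linearIndependent_of_dotProduct
    (d := fun i => wvecDual (p ^ e) (n + 1) (a ∘ i.succAbove) (b ∘ i.succAbove))
    (fun i => ?_) (fun i j hij => ?_)
  · rw [wvecDual_dotProduct_wvec]
    refine prod_ne_zero_iff.mpr fun k _ => pow_ne_zero _ (sub_ne_zero.mpr ?_)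
    simpa only [Function.comp_apply, mul_comm] using
      hprop i (i.succAbove k) (Fin.succAbove_ne i k).symm
  · obtain ⟨k, rfl⟩ := Fin.exists_succAbove_eq hij.symm
    refine (wvecDual_dotProduct_wvec ..).trans (prod_eq_zero (mem_univ k) ?_)
    simp [mul_comm, (expChar_pos K p).ne']

end

theorem wvec_linearIndependent_general (q t : ℕ) (hq : IsPrimePow q)
    (K : Type) [Field K] [Fintype K] (hK : Fintype.card K = q ^ (t - 1))
    (a b : Fin t → K)
    (hprop : ∀ i j, i ≠ j → a i * b j ≠ a j * b i) :
    LinearIndependent K (fun i => wvec q t (a i) (b i)) := by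
  obtain ⟨p, e, hp, -, rfl⟩ := hq
  have : Fact p.Prime := ⟨hp.nat_prime⟩
  have : CharP K p := charP_of_card_eq_prime_pow (hK.trans (pow_mul p e (t - 1)).symm)
  cases t with
  | zero => exact linearIndependent_empty_type
  | succ n => exact linearIndependent_wvec_succ e n a b hprop

/-- If `(a₁,b₁), …, (a_t,b_t)` are nonzero, pairwise non-proportional pairs
in `F_{q^(t-1)} × F_{q^(t-1)}` (i.e. `t` distinct points of the projective line), then the
`t` vectors `w(a₁,b₁), …, w(a_t,b_t)` are linearly independent over `F_{q^(t-1)}`: any `t`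
points of the variety `𝒱` are in general position. -/
theorem wvec_linearIndependent (q t : ℕ) (ht : 2 ≤ t) (hq : IsPrimePow q)
    (K : Type) [Field K] [Fintype K] (hK : Fintype.card K = q ^ (t - 1))
    (a b : Fin t → K) (h0 : ∀ i, (a i, b i) ≠ (0, 0))
    (hprop : ∀ i j, i ≠ j → a i * b j ≠ a j * b i) :
    LinearIndependent K (fun i => wvec q t (a i) (b i)) :=
  wvec_linearIndependent_general q t hq K hK a b hprop
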